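/- arXiv:2509.07703 — 3 statements merged into one kernel-verified Lean document; each statement's English description precedes it below -/
import Mathlib

section
/- Let S_i ∈ R^{d×d}, i = 1,…,n, be positive or negative definite matrices, |S| = blkdiag(|S_1|,…,|S_n|), and L̄ = L ⊗ I_d for the Laplacian L of a connected undirected graph. Then the matrix |S|L̄ has exactly d zero eigenvalues, and every nonzero eigenvalue of |S|L̄ has strictly positive real part. -/
open Matrix
open scoped Kronecker

/-- `M` is positive definite in the (possibly non-symmetric) sense. -/
def PosDefMat {d : ℕ} (M : Matrix (Fin d) (Fin d) ℝ) : Prop :=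
  ∀ x : Fin d → ℝ, x ≠ 0 → 0 < x ⬝ᵥ M.mulVec x

/-- `M` is negative definite. -/
def NegDefMat {d : ℕ} (M : Matrix (Fin d) (Fin d) ℝ) : Prop :=
  ∀ x : Fin d → ℝ, x ≠ 0 → x ⬝ᵥ M.mulVec x < 0

/-- The block-diagonal matrix `blkdiag(M_1, …, M_n)` indexed by `Fin n × Fin d`. -/
def blkDiag {n d : ℕ} (M : Fin n → Matrix (Fin d) (Fin d) ℝ) :
    Matrix (Fin n × Fin d) (Fin n × Fin d) ℝ :=
  Matrix.of fun p q => if p.1 = q.1 then M p.1 p.2 q.2 else 0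

/-!
Write `A = |S|` and `L̄ = L ⊗ I_d`. The quadratic form of `A` is positive definite and `L̄` is
positive semidefinite, with a kernel of dimension `d` because the graph is connected.

If `A L̄ v = μ v` with `μ ≠ 0`, then `y = L̄ v ≠ 0` and `y* A y = μ (v* L̄ v)` with `v* L̄ v > 0`,
so `Re μ > 0`.

At `0`, `ker (A L̄) = ker L̄` and there are no Jordan chains: if `(A L̄)² z = 0`, then `y = L̄ z`
satisfies `yᵀ A y = zᵀ L̄ A y = 0`, so `y = 0`. Hence the algebraic multiplicity of `0` is
`dim ker L̄ = d`.
-/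

open Polynomial Module ComplexOrder

namespace Module.End

variable {K V : Type*} [Field K] [AddCommGroup V] [Module K V]

theorem maxGenEigenspace_zero_eq_ker {f : End K V}
    (h : LinearMap.ker f = LinearMap.ker (f ^ 2)) : f.maxGenEigenspace 0 = LinearMap.ker f := by
  refine le_antisymm (fun x hx => ?_) fun x hx =>
    (mem_maxGenEigenspace _ _ _).mpr ⟨1, by simpa using hx⟩
  obtain ⟨k, hk⟩ := (mem_maxGenEigenspace _ _ _).mp hx
  have hker : LinearMap.ker f = LinearMap.ker (f ^ (1 + k)) := by
    simpa using ker_pow_constant (f := f) (k := 1) (by simpa using h) k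
  simp only [zero_smul, sub_zero] at hk
  rw [hker, LinearMap.mem_ker, pow_add, mul_apply, hk, map_zero]

theorem rootMultiplicity_zero_charpoly [FiniteDimensional K V] {f : End K V}
    (h : LinearMap.ker f = LinearMap.ker (f ^ 2)) :
    f.charpoly.rootMultiplicity 0 = finrank K (LinearMap.ker f) := by
  rw [rootMultiplicity_eq_natTrailingDegree', ← LinearMap.finrank_maxGenEigenspace_zero_eq,
    maxGenEigenspace_zero_eq_ker h]

end Module.End

namespace Matrix

variable {ι : Type*} [Fintype ι] {A L : Matrix ι ι ℝ}

theorem eq_zero_of_mulVec_eq_zero_of_pos (hA : ∀ x, x ≠ 0 → 0 < x ⬝ᵥ A *ᵥ x) {x : ι → ℝ}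
    (h : A *ᵥ x = 0) : x = 0 := by
  by_contra hx
  simpa [h] using hA x hx

theorem dotProduct_mulVec_nonneg_of_pos (hA : ∀ x, x ≠ 0 → 0 < x ⬝ᵥ A *ᵥ x) (x : ι → ℝ) :
    0 ≤ x ⬝ᵥ A *ᵥ x := by
  rcases eq_or_ne x 0 with rfl | hx
  · simp
  · exact (hA x hx).le

theorem mul_mulVec_eq_zero_of_sq (hA : ∀ x, x ≠ 0 → 0 < x ⬝ᵥ A *ᵥ x) (hL : L.IsSymm)
    {z : ι → ℝ} (h : (A * L) *ᵥ ((A * L) *ᵥ z) = 0) : (A * L) *ᵥ z = 0 := by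
  set y := L *ᵥ z
  have hLAy : L *ᵥ (A *ᵥ y) = 0 :=
    eq_zero_of_mulVec_eq_zero_of_pos hA (by simpa only [y, mulVec_mulVec, mul_assoc] using h)
  have hy : y ⬝ᵥ A *ᵥ y = 0 :=
    calc y ⬝ᵥ A *ᵥ y = z ⬝ᵥ L *ᵥ (A *ᵥ y) := by rw [dotProduct_mulVec z, ← mulVec_transpose, hL.eq]
      _ = 0 := by rw [hLAy, dotProduct_zero]
  have hy0 : L *ᵥ z = 0 := by
    by_contra hy0
    exact (hA y hy0).ne' hy
  rw [← mulVec_mulVec, hy0, mulVec_zero]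

theorem re_star_dotProduct_map_ofReal_mulVec (M : Matrix ι ι ℝ) (z : ι → ℂ) :
    (star z ⬝ᵥ M.map Complex.ofReal *ᵥ z).re
      = (fun i => (z i).re) ⬝ᵥ M *ᵥ (fun i => (z i).re)
        + (fun i => (z i).im) ⬝ᵥ M *ᵥ (fun i => (z i).im) := by
  simp only [dotProduct, mulVec, Pi.star_apply, map_apply]
  rw [Complex.re_sum, ← Finset.sum_add_distrib]
  refine Finset.sum_congr rfl fun i _ => ?_
  rw [Complex.mul_re, Complex.re_sum, Complex.im_sum]
  simp only [Complex.star_def, Complex.conj_re, Complex.conj_im, Complex.re_ofReal_mul,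
    Complex.im_ofReal_mul, Finset.mul_sum]
  rw [← Finset.sum_sub_distrib, ← Finset.sum_add_distrib]
  exact Finset.sum_congr rfl fun j _ => by ring

theorem re_star_dotProduct_map_ofReal_mulVec_pos (hA : ∀ x, x ≠ 0 → 0 < x ⬝ᵥ A *ᵥ x)
    {z : ι → ℂ} (hz : z ≠ 0) : 0 < (star z ⬝ᵥ A.map Complex.ofReal *ᵥ z).re := by
  rw [re_star_dotProduct_map_ofReal_mulVec]
  by_cases hre : (fun i => (z i).re) = 0
  · have him : (fun i => (z i).im) ≠ 0 := fun him =>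
      hz (funext fun i => Complex.ext (congrFun hre i) (congrFun him i))
    linarith [dotProduct_mulVec_nonneg_of_pos hA fun i => (z i).re, hA _ him]
  · linarith [hA _ hre, dotProduct_mulVec_nonneg_of_pos hA fun i => (z i).im]

theorem PosSemidef.map_ofReal (hL : L.PosSemidef) : (L.map Complex.ofReal).PosSemidef := by
  classical
  open scoped MatrixOrder in
  obtain ⟨B, rfl⟩ := CStarAlgebra.nonneg_iff_eq_star_mul_self.mp hL.nonneg
  have hmap : (star B * B).map Complex.ofReal
      = (B.map Complex.ofReal)ᴴ * B.map Complex.ofReal := by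
    rw [star_eq_conjTranspose, ← conjTranspose_map _ (fun _ => by simp)]
    exact Matrix.map_mul (f := Complex.ofRealHom)
  rw [hmap]
  exact posSemidef_conjTranspose_mul_self _

theorem re_pos_of_mulVec_eq_smul (hA : ∀ x, x ≠ 0 → 0 < x ⬝ᵥ A *ᵥ x) (hL : L.PosSemidef)
    {μ : ℂ} (hμ : μ ≠ 0) {v : ι → ℂ} (hv : v ≠ 0)
    (h : (A * L).map Complex.ofReal *ᵥ v = μ • v) : 0 < μ.re := by
  set Lc := L.map Complex.ofReal
  have hLc : Lc.PosSemidef := hL.map_ofReal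
  set y := Lc *ᵥ v
  have hAy : A.map Complex.ofReal *ᵥ y = μ • v := by
    rw [mulVec_mulVec, ← h]
    exact congrArg (· *ᵥ v) (Matrix.map_mul (f := Complex.ofRealHom)).symm
  set c := star v ⬝ᵥ y
  have hc : 0 < c := by
    refine lt_of_le_of_ne (hLc.dotProduct_mulVec_nonneg v) fun hc0 => ?_
    have hy : y = 0 := (hLc.dotProduct_mulVec_zero_iff v).mp hc0.symm
    rw [hy, mulVec_zero, eq_comm, smul_eq_zero] at hAy
    exact hAy.elim hμ hv
  have hy0 : y ≠ 0 := fun hy => hc.ne' (by simp [c, hy])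
  -- the Rayleigh quotient: `y* A y = μ (y* v) = μ (v* L v) = μ c`
  have hquot : star y ⬝ᵥ A.map Complex.ofReal *ᵥ y = μ * c := by
    rw [hAy, dotProduct_smul, smul_eq_mul, star_mulVec, ← dotProduct_mulVec, hLc.isHermitian.eq]
  have hpos := re_star_dotProduct_map_ofReal_mulVec_pos hA hy0
  rw [hquot, Complex.mul_re, (Complex.pos_iff.mp hc).2.symm, mul_zero, sub_zero] at hpos
  exact pos_of_mul_pos_left hpos (Complex.pos_iff.mp hc).1.le

theorem count_roots_charpoly_map {R S n : Type*} [CommRing R] [CommRing S] [IsDomain S]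
    [DecidableEq S] [Fintype n] [DecidableEq n] {f : R →+* S} (hf : Function.Injective f)
    (B : Matrix n n R) (a : R) :
    ((B.map f).charpoly.roots.count (f a)) = B.charpoly.rootMultiplicity a := by
  rw [count_roots, charpoly_map, ← eq_rootMultiplicity_map hf]

variable [DecidableEq ι]

theorem rootMultiplicity_zero_charpoly_mul (hA : ∀ x, x ≠ 0 → 0 < x ⬝ᵥ A *ᵥ x)
    (hL : L.IsSymm) :
    (A * L).charpoly.rootMultiplicity 0 = finrank ℝ (LinearMap.ker (toLin' L)) := by
  have hker : LinearMap.ker (toLin' (A * L)) = LinearMap.ker (toLin' L) := by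
    ext z
    simp only [LinearMap.mem_ker, toLin'_apply, ← mulVec_mulVec]
    exact ⟨eq_zero_of_mulVec_eq_zero_of_pos hA, fun h => by rw [h, mulVec_zero]⟩
  have hsq : LinearMap.ker (toLin' (A * L)) = LinearMap.ker (toLin' (A * L) ^ 2) := by
    refine le_antisymm (fun z hz => ?_) fun z hz => ?_
    · simp_all [sq]
    · simp only [LinearMap.mem_ker, sq, Module.End.mul_apply, toLin'_apply] at hz ⊢
      exact mul_mulVec_eq_zero_of_sq hA hL hz
  rw [← charpoly_toLin', Module.End.rootMultiplicity_zero_charpoly hsq, hker]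

theorem re_pos_of_mem_roots_charpoly (hA : ∀ x, x ≠ 0 → 0 < x ⬝ᵥ A *ᵥ x) (hL : L.PosSemidef)
    {μ : ℂ} (hμ : μ ∈ ((A * L).map Complex.ofReal).charpoly.roots) (hμ0 : μ ≠ 0) :
    0 < μ.re := by
  have hroot := (mem_roots'.mp hμ).2
  rw [← charpoly_toLin'] at hroot
  obtain ⟨v, hv⟩ :=
    ((Module.End.hasEigenvalue_iff_isRoot_charpoly _ _).mpr hroot).exists_hasEigenvector
  exact re_pos_of_mulVec_eq_smul hA hL hμ0 hv.2 (by simpa using hv.apply_eq_smul)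

end Matrix

section Kronecker

variable {K m o : Type*} [Field K] [Fintype m] [Fintype o] [DecidableEq o]

theorem Matrix.kronecker_one_mulVec_apply (L : Matrix m m K) (x : m × o → K) (i : m) (k : o) :
    ((L ⊗ₖ (1 : Matrix o o K)) *ᵥ x) (i, k) = (L *ᵥ fun j => x (j, k)) i := by
  simp only [mulVec, dotProduct, kroneckerMap_apply, one_apply, Fintype.sum_prod_type]
  refine Finset.sum_congr rfl fun j _ => ?_
  rw [Finset.sum_eq_single k] <;> simp +contextual [eq_comm]

theorem Matrix.kronecker_one_mulVec_eq_zero_iff (L : Matrix m m K) (x : m × o → K) :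
    (L ⊗ₖ (1 : Matrix o o K)) *ᵥ x = 0 ↔ ∀ k, L *ᵥ (fun j => x (j, k)) = 0 := by
  simp only [funext_iff, Prod.forall, kronecker_one_mulVec_apply, Pi.zero_apply]
  exact forall_comm

noncomputable def Matrix.kerKroneckerOneEquiv [DecidableEq m] (L : Matrix m m K) :
    LinearMap.ker (toLin' (L ⊗ₖ (1 : Matrix o o K))) ≃ₗ[K] (o → LinearMap.ker (toLin' L)) where
  toFun x k := ⟨fun j => x.1 (j, k), (kronecker_one_mulVec_eq_zero_iff L x.1).mp
    (by simpa only [LinearMap.mem_ker, toLin'_apply] using x.2) k⟩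
  invFun y := ⟨fun p => (y p.2).1 p.1, by
    rw [LinearMap.mem_ker, toLin'_apply, kronecker_one_mulVec_eq_zero_iff]
    exact fun k => by simpa only [LinearMap.mem_ker, toLin'_apply] using (y k).2⟩
  map_add' _ _ := rfl
  map_smul' _ _ := rfl
  left_inv _ := rfl
  right_inv _ := rfl

theorem Matrix.finrank_ker_toLin'_kronecker_one [DecidableEq m] (L : Matrix m m K) :
    finrank K (LinearMap.ker (toLin' (L ⊗ₖ (1 : Matrix o o K))))
      = Fintype.card o * finrank K (LinearMap.ker (toLin' L)) := by
  rw [(kerKroneckerOneEquiv L).finrank_eq, finrank_pi_fintype, Finset.sum_const,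
    Finset.card_univ, smul_eq_mul]

end Kronecker

theorem SimpleGraph.Connected.finrank_ker_toLin'_lapMatrix {V : Type*} [Fintype V]
    [DecidableEq V] {G : SimpleGraph V} [DecidableRel G.Adj] (hG : G.Connected) :
    finrank ℝ (LinearMap.ker (toLin' (G.lapMatrix ℝ))) = 1 := by
  rw [← G.card_connectedComponent_eq_finrank_ker_toLin'_lapMatrix]
  have hsub := hG.preconnected.subsingleton_connectedComponent
  have := hG.nonempty.map G.connectedComponentMk
  exact le_antisymm (Fintype.card_le_one_iff_subsingleton.mpr hsub) Fintype.card_pos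

section BlockDiagonal

variable {n d : ℕ}

theorem posDefMat_smul {M : Matrix (Fin d) (Fin d) ℝ} {c : ℝ}
    (h : (PosDefMat M ∧ c = 1) ∨ (NegDefMat M ∧ c = -1)) : PosDefMat (c • M) := by
  intro x hx
  rw [smul_mulVec, dotProduct_smul, smul_eq_mul]
  rcases h with ⟨hM, rfl⟩ | ⟨hM, rfl⟩
  · simpa using hM x hx
  · simpa using hM x hx

theorem dotProduct_blkDiag_mulVec (M : Fin n → Matrix (Fin d) (Fin d) ℝ) (x : Fin n × Fin d → ℝ) :
    x ⬝ᵥ blkDiag M *ᵥ x = ∑ i, (fun k => x (i, k)) ⬝ᵥ M i *ᵥ fun k => x (i, k) := by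
  simp only [dotProduct, mulVec, blkDiag, of_apply, Fintype.sum_prod_type]
  refine Finset.sum_congr rfl fun i _ => Finset.sum_congr rfl fun k _ => ?_
  rw [Finset.sum_eq_single i (fun j _ hj => by simp [Ne.symm hj]) (by simp)]
  simp

theorem dotProduct_blkDiag_mulVec_pos {M : Fin n → Matrix (Fin d) (Fin d) ℝ}
    (hM : ∀ i, PosDefMat (M i)) {x : Fin n × Fin d → ℝ} (hx : x ≠ 0) :
    0 < x ⬝ᵥ blkDiag M *ᵥ x := by
  obtain ⟨⟨i, k⟩, hik⟩ := Function.ne_iff.mp hx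
  rw [dotProduct_blkDiag_mulVec]
  exact Finset.sum_pos' (fun j _ => dotProduct_mulVec_nonneg_of_pos (hM j) _)
    ⟨i, Finset.mem_univ i, hM i _ fun h => hik (congrFun h k)⟩

end BlockDiagonal

/-- For scaling matrices `S_i` that are positive or negative definite (with `|S_i| = sgn(S_i) S_i`)
and `L` the Laplacian of a connected undirected graph on `n` vertices, the matrix `|S| L̄`
(with `|S| = blkdiag(|S_1|,…,|S_n|)` and `L̄ = L ⊗ I_d`) has exactly `d` zero eigenvalues
(counted with algebraic multiplicity), and all of its nonzero eigenvalues have strictly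
positive real part. -/
theorem absS_mul_laplacian_spectrum (n d : ℕ) (G : SimpleGraph (Fin n)) [DecidableRel G.Adj]
    (hconn : G.Connected) (S : Fin n → Matrix (Fin d) (Fin d) ℝ) (s : Fin n → ℝ)
    (hS : ∀ i, (PosDefMat (S i) ∧ s i = 1) ∨ (NegDefMat (S i) ∧ s i = -1)) :
    Multiset.count 0
        (((blkDiag (fun i => s i • S i) *
          (G.lapMatrix ℝ ⊗ₖ (1 : Matrix (Fin d) (Fin d) ℝ))).map
            (Complex.ofReal)).charpoly).roots = d ∧
    ∀ μ ∈ (((blkDiag (fun i => s i • S i) *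
          (G.lapMatrix ℝ ⊗ₖ (1 : Matrix (Fin d) (Fin d) ℝ))).map
            (Complex.ofReal)).charpoly).roots, μ ≠ 0 → 0 < μ.re := by
  have hA : ∀ x, x ≠ 0 → 0 < x ⬝ᵥ blkDiag (fun i => s i • S i) *ᵥ x := fun _ =>
    dotProduct_blkDiag_mulVec_pos fun i => posDefMat_smul (hS i)
  have hL : (G.lapMatrix ℝ ⊗ₖ (1 : Matrix (Fin d) (Fin d) ℝ)).PosSemidef :=
    (G.posSemidef_lapMatrix ℝ).kronecker PosSemidef.one
  refine ⟨?_, fun μ hμ hμ0 => re_pos_of_mem_roots_charpoly hA hL hμ hμ0⟩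
  refine (count_roots_charpoly_map (f := Complex.ofRealHom) Complex.ofReal_injective _ 0).trans ?_
  rw [rootMultiplicity_zero_charpoly_mul hA (isHermitian_iff_isSymm.mp hL.isHermitian),
    finrank_ker_toLin'_kronecker_one,
    hconn.finrank_ker_toLin'_lapMatrix, Fintype.card_fin, mul_one]
end

section
/- Consider the dynamics q'(τ) = -β|S|L̄ q̂(τ_l) on each interval [τ_l, τ_{l+1}) with held state q̂(τ_l), and measurement error ε(τ) = q̂(τ_l) - q(τ). Define V(τ) = (1/2) q(τ)^T L̄ q(τ) and ẑ(τ_l) = L̄ q̂(τ_l). Then V'(τ) = -β ẑ(τ_l)^T |S| ẑ(τ_l) + β ẑ(τ_l)^T |S|^T L̄ ε(τ_l) + β² (τ - τ_l) ẑ(τ_l)^T |S|^T L̄ |S| ẑ(τ_l). -/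
open Matrix
open scoped Kronecker

/-!
On a sampling interval the velocity `-β |S| ẑ` is constant, so the state is affine,
`q τ = q τ_l - β (τ - τ_l) |S| ẑ`. Since `L̄` is symmetric, `V' = (L̄ q)ᵀ q'`; substituting
`L̄ q(τ_l) = ẑ - L̄ ε(τ_l)` into the affine formula produces the three terms.
-/

namespace Matrix

theorem IsSymm.kronecker {α m n : Type*} [Mul α] {A : Matrix m m α} {B : Matrix n n α}
    (hA : A.IsSymm) (hB : B.IsSymm) : (A ⊗ₖ B).IsSymm := by
  rw [IsSymm, ← kroneckerMap_transpose, hA.eq, hB.eq]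

theorem IsSymm.dotProduct_mulVec_comm {α n : Type*} [Fintype n] [CommSemiring α]
    {A : Matrix n n α} (hA : A.IsSymm) (x y : n → α) : x ⬝ᵥ A *ᵥ y = A *ᵥ x ⬝ᵥ y := by
  rw [dotProduct_mulVec, ← vecMul_transpose, hA.eq, dotProduct_comm]

end Matrix

section HasDerivAt

variable {𝕜 ι m : Type*} [NontriviallyNormedField 𝕜] [Fintype ι] {f g : 𝕜 → ι → 𝕜}
  {f' g' : ι → 𝕜} {x : 𝕜}

theorem HasDerivAt.dotProduct (hf : HasDerivAt f f' x) (hg : HasDerivAt g g' x) :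
    HasDerivAt (fun t => f t ⬝ᵥ g t) (f' ⬝ᵥ g x + f x ⬝ᵥ g') x := by
  simp only [_root_.dotProduct, ← Finset.sum_add_distrib]
  exact HasDerivAt.fun_sum fun i _ => (hasDerivAt_pi.mp hf i).mul (hasDerivAt_pi.mp hg i)

theorem HasDerivAt.mulVec (A : Matrix m ι 𝕜) (hf : HasDerivAt f f' x) :
    HasDerivAt (fun t => A *ᵥ f t) (A *ᵥ f') x :=
  hasDerivAt_pi.mpr fun i => (hasDerivAt_const x (A i)).dotProduct hf |>.congr_deriv <| by
    rw [zero_dotProduct, zero_add]; rfl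

end HasDerivAt

theorem HasDerivAt.half_dotProduct_mulVec_self {ι : Type*} [Fintype ι] {L : Matrix ι ι ℝ}
    (hL : L.IsSymm) {q : ℝ → ι → ℝ} {v : ι → ℝ} {x : ℝ} (hq : HasDerivAt q v x) :
    HasDerivAt (fun t => 1 / 2 * (q t ⬝ᵥ L *ᵥ q t)) (L *ᵥ q x ⬝ᵥ v) x := by
  refine ((hq.dotProduct (hq.mulVec L)).const_mul (1 / 2 : ℝ)).congr_deriv ?_
  rw [dotProduct_comm v, hL.dotProduct_mulVec_comm (q x)]
  ring

theorem eq_add_sub_smul_of_hasDerivAt_const {E : Type*} [NormedAddCommGroup E]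
    [NormedSpace ℝ E] {f : ℝ → E} {v : E} {a b : ℝ} (hf : ∀ t ∈ Set.Ico a b, HasDerivAt f v t) :
    ∀ t ∈ Set.Ico a b, f t = f a + (t - a) • v := by
  intro t ht
  have hg : ∀ s ∈ Set.Icc a t, HasDerivAt (fun s => f s - (s - a) • v) 0 s := fun s hs => by
    simpa using (hf s ⟨hs.1, hs.2.trans_lt ht.2⟩).fun_sub
      (((hasDerivAt_id s).sub_const a).smul_const v)
  have hconst := constant_of_has_deriv_right_zero
    (fun s hs => (hg s hs).continuousAt.continuousWithinAt)
    (fun s hs => (hg s (Set.Ico_subset_Icc_self hs)).hasDerivWithinAt) t ⟨ht.1, le_rfl⟩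
  simp only [sub_self, zero_smul, sub_zero] at hconst
  rw [← hconst, sub_add_cancel]

theorem hasDerivAt_half_dotProduct_mulVec_of_heldState {ι : Type*} [Fintype ι]
    {L S : Matrix ι ι ℝ} (hL : L.IsSymm) {β a b : ℝ} {qhat : ι → ℝ} {q : ℝ → ι → ℝ}
    (hq : ∀ t ∈ Set.Ico a b, HasDerivAt q (-β • S *ᵥ L *ᵥ qhat) t) :
    ∀ t ∈ Set.Ico a b, HasDerivAt (fun t => 1 / 2 * (q t ⬝ᵥ L *ᵥ q t))
      (-β * (L *ᵥ qhat ⬝ᵥ S *ᵥ L *ᵥ qhat) + β * (L *ᵥ qhat ⬝ᵥ Sᵀ *ᵥ L *ᵥ (qhat - q a))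
        + β ^ 2 * (t - a) * (L *ᵥ qhat ⬝ᵥ Sᵀ *ᵥ L *ᵥ S *ᵥ L *ᵥ qhat)) t := by
  intro t ht
  set z := L *ᵥ qhat
  have hflow := eq_add_sub_smul_of_hasDerivAt_const hq t ht
  have hLq : L *ᵥ q a = z - L *ᵥ (qhat - q a) := by rw [mulVec_sub, sub_sub_cancel]
  refine (HasDerivAt.half_dotProduct_mulVec_self hL (hq t ht)).congr_deriv ?_
  rw [dotProduct_transpose_mulVec, dotProduct_transpose_mulVec, hflow, mulVec_add, hLq]
  simp only [mulVec_smul, add_dotProduct, sub_dotProduct, smul_dotProduct, dotProduct_smul,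
    smul_eq_mul]
  ring

theorem lyapunov_derivative_formula_general (n d : ℕ) (G : SimpleGraph (Fin n)) [DecidableRel G.Adj]
    (absS : Fin n → Matrix (Fin d) (Fin d) ℝ) (β τl τl1 : ℝ)
    (qhat : Fin n × Fin d → ℝ) (q : ℝ → (Fin n × Fin d → ℝ))
    (hq : ∀ τ ∈ Set.Ico τl τl1,
      HasDerivAt q (-β • ((blkDiag absS).mulVec
        ((G.lapMatrix ℝ ⊗ₖ (1 : Matrix (Fin d) (Fin d) ℝ)).mulVec qhat))) τ) :
    ∀ τ ∈ Set.Ico τl τl1,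
      HasDerivAt (fun τ => (1 / 2 : ℝ) * (q τ ⬝ᵥ
          (G.lapMatrix ℝ ⊗ₖ (1 : Matrix (Fin d) (Fin d) ℝ)).mulVec (q τ)))
        (-β * ((G.lapMatrix ℝ ⊗ₖ (1 : Matrix (Fin d) (Fin d) ℝ)).mulVec qhat ⬝ᵥ
            (blkDiag absS).mulVec ((G.lapMatrix ℝ ⊗ₖ (1 : Matrix (Fin d) (Fin d) ℝ)).mulVec qhat))
          + β * ((G.lapMatrix ℝ ⊗ₖ (1 : Matrix (Fin d) (Fin d) ℝ)).mulVec qhat ⬝ᵥ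
            (blkDiag absS)ᵀ.mulVec ((G.lapMatrix ℝ ⊗ₖ (1 : Matrix (Fin d) (Fin d) ℝ)).mulVec
              (qhat - q τl)))
          + β ^ 2 * (τ - τl) * ((G.lapMatrix ℝ ⊗ₖ (1 : Matrix (Fin d) (Fin d) ℝ)).mulVec qhat ⬝ᵥ
            (blkDiag absS)ᵀ.mulVec ((G.lapMatrix ℝ ⊗ₖ (1 : Matrix (Fin d) (Fin d) ℝ)).mulVec
              ((blkDiag absS).mulVec
                ((G.lapMatrix ℝ ⊗ₖ (1 : Matrix (Fin d) (Fin d) ℝ)).mulVec qhat))))) τ :=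
  hasDerivAt_half_dotProduct_mulVec_of_heldState
    ((G.isSymm_lapMatrix ℝ).kronecker isSymm_one) hq

/-- On a sampling interval `[τ_l, τ_{l+1})`, for the held-state dynamics
`q'(τ) = -β |S| L̄ q̂(τ_l)` with measurement error `ε(τ) = q̂(τ_l) - q(τ)`,
the Lyapunov function `V(τ) = (1/2) q(τ)ᵀ L̄ q(τ)` satisfies
`V'(τ) = -β ẑᵀ|S|ẑ + β ẑᵀ|S|ᵀ L̄ ε(τ_l) + β²(τ-τ_l) ẑᵀ|S|ᵀ L̄ |S| ẑ`,
where `ẑ = L̄ q̂(τ_l)`. -/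
theorem lyapunov_derivative_formula (n d : ℕ) (G : SimpleGraph (Fin n)) [DecidableRel G.Adj]
    (absS : Fin n → Matrix (Fin d) (Fin d) ℝ) (β τl τl1 : ℝ) (hβ : 0 < β)
    (qhat : Fin n × Fin d → ℝ) (q : ℝ → (Fin n × Fin d → ℝ))
    (hq : ∀ τ ∈ Set.Ico τl τl1,
      HasDerivAt q (-β • ((blkDiag absS).mulVec
        ((G.lapMatrix ℝ ⊗ₖ (1 : Matrix (Fin d) (Fin d) ℝ)).mulVec qhat))) τ) :
    ∀ τ ∈ Set.Ico τl τl1,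
      HasDerivAt (fun τ => (1 / 2 : ℝ) * (q τ ⬝ᵥ
          (G.lapMatrix ℝ ⊗ₖ (1 : Matrix (Fin d) (Fin d) ℝ)).mulVec (q τ)))
        (-β * ((G.lapMatrix ℝ ⊗ₖ (1 : Matrix (Fin d) (Fin d) ℝ)).mulVec qhat ⬝ᵥ
            (blkDiag absS).mulVec ((G.lapMatrix ℝ ⊗ₖ (1 : Matrix (Fin d) (Fin d) ℝ)).mulVec qhat))
          + β * ((G.lapMatrix ℝ ⊗ₖ (1 : Matrix (Fin d) (Fin d) ℝ)).mulVec qhat ⬝ᵥ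
            (blkDiag absS)ᵀ.mulVec ((G.lapMatrix ℝ ⊗ₖ (1 : Matrix (Fin d) (Fin d) ℝ)).mulVec
              (qhat - q τl)))
          + β ^ 2 * (τ - τl) * ((G.lapMatrix ℝ ⊗ₖ (1 : Matrix (Fin d) (Fin d) ℝ)).mulVec qhat ⬝ᵥ
            (blkDiag absS)ᵀ.mulVec ((G.lapMatrix ℝ ⊗ₖ (1 : Matrix (Fin d) (Fin d) ℝ)).mulVec
              ((blkDiag absS).mulVec
                ((G.lapMatrix ℝ ⊗ₖ (1 : Matrix (Fin d) (Fin d) ℝ)).mulVec qhat))))) τ :=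
  lyapunov_derivative_formula_general n d G absS β τl τl1 qhat q hq
end

section
/- Let ζ : [0,∞) → R^m satisfy ζ'(τ) = -βA ζ(τ) - βA ε(τ) where ‖ε(τ)‖ ≤ √n ε̄ for τ ∈ [τ_l, τ_{l+1}), and the zero-eigenspace projection annihilates both ζ and Aε. Then ‖ζ(τ)‖ ≤ c_2 ε̄ + e^{-β Re(Λ_1)(τ-τ_l)} ( c_1 ‖ζ(τ_l)‖ - c_2 ε̄ ) for τ ∈ [τ_l, τ_{l+1}), where c_1 = ‖W‖‖W^{-1}‖ and c_2 = c_1 ‖A‖ √n / Re(Λ_1). -/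
open Matrix

attribute [local instance] Matrix.linftyOpNormedAddCommGroup Matrix.linftyOpNormedRing
  Matrix.linftyOpNormedAlgebra

/-!
Pass to the eigencoordinates `η = W⁻¹ ζ` (over `ℂ`). Each coordinate solves a scalar equation
`η_i' = -β λ_i η_i + f_i` whose forcing `f_i = -β (W⁻¹ A ε)_i = -β λ_i (W⁻¹ ε)_i` is bounded by
`β ‖W⁻¹‖ ‖A‖ √n ε̄`. For `λ_i = 0` the forcing vanishes, so `η_i` is constant, and it starts at `0`
because `ζ(τ_l) ∈ im Aᵐ`. For `Re λ_i ≥ Re Λ₁` the integrating factor `e^{β λ_i t}` and a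
fencing argument give
`|η_i(τ)| ≤ e^{-β Re λ_i t} |η_i(τ_l)| + ‖W⁻¹‖ ‖A‖ √n ε̄ (1 - e^{-β Re λ_i t}) / Re λ_i`,
a bound that only grows when `Re λ_i` is lowered to `Re Λ₁` (convexity of `exp`). Returning through
`W` costs the factor `‖W‖`.
-/

open Set Real

theorem one_sub_exp_neg_mul_div_le {ρ r t : ℝ} (hρ : 0 < ρ) (hρr : ρ ≤ r) (ht : 0 ≤ t) :
    (1 - exp (-(r * t))) / r ≤ (1 - exp (-(ρ * t))) / ρ := by
  rcases ht.eq_or_lt with rfl | ht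
  · simp
  have hr : 0 < r := hρ.trans_le hρr
  have hslope := convexOn_exp.secant_mono (a := 0) (x := -(r * t)) (y := -(ρ * t)) (mem_univ _)
    (mem_univ _) (mem_univ _) (by nlinarith) (by nlinarith) (by nlinarith)
  rw [exp_zero, sub_zero, sub_zero, div_neg, div_neg, neg_le_neg_iff, ← neg_sub 1 (exp _),
    ← neg_sub 1 (exp _), neg_div, neg_div, neg_le_neg_iff] at hslope
  calc (1 - exp (-(r * t))) / r = (1 - exp (-(r * t))) / (r * t) * t := by field_simp
    _ ≤ (1 - exp (-(ρ * t))) / (ρ * t) * t := by gcongr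
    _ = (1 - exp (-(ρ * t))) / ρ := by field_simp

section ScalarDecay

variable {E : Type*} [NormedAddCommGroup E] [NormedSpace ℂ E] {z f : ℝ → E} {μ : ℂ} {a b C : ℝ}

theorem norm_le_of_hasDerivAt_eq_neg_smul_add (hab : a ≤ b) (hμ : 0 < μ.re)
    (hz : ∀ s ∈ Icc a b, HasDerivAt z (-μ • z s + f s) s) (hf : ∀ s ∈ Icc a b, ‖f s‖ ≤ C) :
    ‖z b‖ ≤ exp (-(μ.re * (b - a))) * ‖z a‖ + C / μ.re * (1 - exp (-(μ.re * (b - a)))) := by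
  set r := μ.re
  have hnorm : ∀ (ν : ℂ) (s : ℝ), ‖Complex.exp (ν * (s - a))‖ = exp (ν.re * (s - a)) := by
    intro ν s
    rw [Complex.norm_exp]
    simp
  set ψ : ℝ → E := fun s => Complex.exp (μ * (s - a)) • z s
  have hψ : ∀ s ∈ Icc a b, HasDerivAt ψ (Complex.exp (μ * (s - a)) • f s) s := by
    intro s hs
    have hlin : HasDerivAt (fun s : ℝ => μ * ((s : ℂ) - a)) μ s := by
      simpa using ((Complex.ofRealCLM.hasDerivAt (x := s)).sub_const (a : ℂ)).const_mul μ
    convert hlin.cexp.fun_smul (hz s hs) using 1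
    rw [smul_add, smul_smul, mul_neg, neg_smul]
    abel
  set B : ℝ → ℝ := fun s => ‖z a‖ + C / r * (exp (r * (s - a)) - 1)
  have hB : ∀ s, HasDerivAt B (C * exp (r * (s - a))) s := by
    intro s
    refine ((((hasDerivAt_id s).sub_const a).const_mul r).exp.sub_const 1 |>.const_mul (C / r)
      |>.const_add ‖z a‖).congr_deriv ?_
    simp only [id, mul_one]
    field_simp
  have hψB : ‖ψ b‖ ≤ B b :=
    image_norm_le_of_norm_deriv_right_le_deriv_boundary
      (fun s hs => (hψ s hs).continuousAt.continuousWithinAt)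
      (fun s hs => (hψ s (Ico_subset_Icc_self hs)).hasDerivWithinAt) (by simp [ψ, B]) hB
      (fun s hs => by
        rw [norm_smul, hnorm, mul_comm]
        exact mul_le_mul_of_nonneg_right (hf s (Ico_subset_Icc_self hs)) (exp_pos _).le)
      (right_mem_Icc.2 hab)
  have hzψ : z b = Complex.exp (-μ * (b - a)) • ψ b := by
    simp [ψ, smul_smul, ← Complex.exp_add]
  rw [hzψ, norm_smul, hnorm, Complex.neg_re, neg_mul]
  calc exp (-(r * (b - a))) * ‖ψ b‖ ≤ exp (-(r * (b - a))) * B b := by gcongr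
    _ = _ := by
      simp only [B, mul_add, mul_sub, mul_one]
      rw [mul_left_comm, ← exp_add, neg_add_cancel, exp_zero]
      ring

theorem norm_le_of_hasDerivAt_eq_neg_smul_add_of_le_re {ρ : ℝ} (hab : a ≤ b) (hρ : 0 < ρ)
    (hρμ : ρ ≤ μ.re) (hz : ∀ s ∈ Icc a b, HasDerivAt z (-μ • z s + f s) s)
    (hf : ∀ s ∈ Icc a b, ‖f s‖ ≤ C) :
    ‖z b‖ ≤ exp (-(ρ * (b - a))) * ‖z a‖ + C / ρ * (1 - exp (-(ρ * (b - a)))) := by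
  have hC : 0 ≤ C := (norm_nonneg _).trans (hf a (left_mem_Icc.2 hab))
  have ht : 0 ≤ b - a := sub_nonneg.2 hab
  calc ‖z b‖ ≤ exp (-(μ.re * (b - a))) * ‖z a‖ + C * ((1 - exp (-(μ.re * (b - a)))) / μ.re) := by
        simpa only [mul_div_assoc', div_mul_eq_mul_div] using
          norm_le_of_hasDerivAt_eq_neg_smul_add hab (hρ.trans_le hρμ) hz hf
    _ ≤ exp (-(ρ * (b - a))) * ‖z a‖ + C * ((1 - exp (-(ρ * (b - a)))) / ρ) := by
        gcongr ?_ + C * ?_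
        · gcongr
        · exact one_sub_exp_neg_mul_div_le hρ hρμ ht
    _ = _ := by ring

end ScalarDecay

section Complexification

variable {ι κ : Type*}

theorem HasDerivAt.ofReal_comp_pi {f : ℝ → ι → ℝ} {f' : ι → ℝ} {x : ℝ} (h : HasDerivAt f f' x) :
    HasDerivAt (fun s => Complex.ofReal ∘ f s) (Complex.ofReal ∘ f') x :=
  hasDerivAt_pi.2 fun i => (hasDerivAt_pi.1 h i).ofReal_comp

variable [Fintype ι]

theorem ofReal_comp_mulVec (M : Matrix κ ι ℝ) (v : ι → ℝ) :
    Complex.ofReal ∘ (M *ᵥ v) = M.map Complex.ofReal *ᵥ (Complex.ofReal ∘ v) :=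
  funext (RingHom.map_mulVec Complex.ofRealHom M v)

theorem HasDerivAt.const_mulVec [Fintype κ] (M : Matrix κ ι ℂ) {f : ℝ → ι → ℂ} {f' : ι → ℂ}
    {x : ℝ} (h : HasDerivAt f f' x) : HasDerivAt (fun s => M *ᵥ f s) (M *ᵥ f') x :=
  ((LinearMap.toContinuousLinearMap M.mulVecLin).restrictScalars ℝ).hasFDerivAt.comp_hasDerivAt x h

theorem norm_ofReal_comp (v : ι → ℝ) : ‖Complex.ofReal ∘ v‖ = ‖v‖ := by
  simp [Pi.norm_def]

theorem norm_mulVec_ofReal_comp_apply_le [Fintype κ] (M : Matrix κ ι ℂ) (v : ι → ℝ) (k : κ) :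
    ‖(M *ᵥ (Complex.ofReal ∘ v)) k‖ ≤ ‖M‖ * ‖v‖ :=
  (norm_le_pi_norm _ k).trans ((linfty_opNorm_mulVec _ _).trans_eq (by rw [norm_ofReal_comp]))

theorem norm_mulVec_map_ofReal_mulVec_apply_le {ι' : Type*} [Fintype κ] [Fintype ι']
    (M : Matrix κ ι ℂ) (A : Matrix ι ι' ℝ) (v : ι' → ℝ) (k : κ) :
    ‖(M *ᵥ (A.map Complex.ofReal *ᵥ (Complex.ofReal ∘ v))) k‖ ≤ ‖M‖ * (‖A‖ * ‖v‖) := by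
  rw [← ofReal_comp_mulVec]
  exact (norm_mulVec_ofReal_comp_apply_le M _ k).trans (by gcongr; exact linfty_opNorm_mulVec A v)

end Complexification

section Eigencoordinates

variable {ι : Type*} [Fintype ι] [DecidableEq ι] {W : Matrix ι ι ℂ} {ev : ι → ℂ}

theorem inv_mulVec_pow_mulVec_of_eq_conj {M : Matrix ι ι ℂ} (hW : IsUnit W)
    (hM : M = W * diagonal ev * W⁻¹) (k : ℕ) (x : ι → ℂ) (i : ι) :
    (W⁻¹ *ᵥ (M ^ k *ᵥ x)) i = ev i ^ k * (W⁻¹ *ᵥ x) i := by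
  have hsemiconj : SemiconjBy W⁻¹ M (diagonal ev) := by
    rw [SemiconjBy, hM, ← mul_assoc, ← mul_assoc,
      nonsing_inv_mul W ((isUnit_iff_isUnit_det W).1 hW), one_mul]
  rw [mulVec_mulVec, (hsemiconj.pow_right k).eq, ← mulVec_mulVec, diagonal_pow, mulVec_diagonal]
  rfl

theorem inv_mulVec_mulVec_of_eq_conj {M : Matrix ι ι ℂ} (hW : IsUnit W)
    (hM : M = W * diagonal ev * W⁻¹) (x : ι → ℂ) (i : ι) :
    (W⁻¹ *ᵥ (M *ᵥ x)) i = ev i * (W⁻¹ *ᵥ x) i := by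
  simpa using inv_mulVec_pow_mulVec_of_eq_conj hW hM 1 x i

variable {A : Matrix ι ι ℝ} {β : ℝ} {ζ ε : ℝ → ι → ℝ}

theorem hasDerivAt_eigencoord (hW : IsUnit W) (hA : A.map Complex.ofReal = W * diagonal ev * W⁻¹)
    {s : ℝ} (hζ : HasDerivAt ζ (-β • (A *ᵥ ζ s + A *ᵥ ε s)) s) (i : ι) :
    HasDerivAt (fun t => (W⁻¹ *ᵥ (Complex.ofReal ∘ ζ t)) i)
      (-(β * ev i) • (W⁻¹ *ᵥ (Complex.ofReal ∘ ζ s)) i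
        + -β * (W⁻¹ *ᵥ (A.map Complex.ofReal *ᵥ (Complex.ofReal ∘ ε s))) i) s := by
  refine (hasDerivAt_pi.1 (hζ.ofReal_comp_pi.const_mulVec W⁻¹) i).congr_deriv ?_
  have hcomplex : Complex.ofReal ∘ (-β • (A *ᵥ ζ s + A *ᵥ ε s))
      = (-β : ℂ) • (A.map Complex.ofReal *ᵥ (Complex.ofReal ∘ ζ s)
        + A.map Complex.ofReal *ᵥ (Complex.ofReal ∘ ε s)) := by
    rw [← ofReal_comp_mulVec, ← ofReal_comp_mulVec]
    funext j
    simp only [Function.comp_apply, Pi.smul_apply, Pi.add_apply, smul_eq_mul]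
    push_cast
    ring
  rw [hcomplex, mulVec_smul, mulVec_add]
  simp only [Pi.smul_apply, Pi.add_apply, smul_eq_mul, inv_mulVec_mulVec_of_eq_conj hW hA]
  ring

theorem eigencoord_eq_zero_of_eigenvalue_eq_zero (hW : IsUnit W)
    (hA : A.map Complex.ofReal = W * diagonal ev * W⁻¹) {a b : ℝ} (hab : a ≤ b)
    (hζ : ∀ s ∈ Icc a b, HasDerivAt ζ (-β • (A *ᵥ ζ s + A *ᵥ ε s)) s) {k : ℕ} (hk : k ≠ 0)
    {y : ι → ℝ} (hy : ζ a = A ^ k *ᵥ y) {i : ι} (hi : ev i = 0) :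
    (W⁻¹ *ᵥ (Complex.ofReal ∘ ζ b)) i = 0 := by
  have hpow : (A ^ k).map Complex.ofReal = A.map Complex.ofReal ^ k :=
    map_pow Complex.ofRealHom.mapMatrix A k
  have hderiv : ∀ s ∈ Icc a b, HasDerivAt (fun t => (W⁻¹ *ᵥ (Complex.ofReal ∘ ζ t)) i) 0 s := by
    intro s hs
    convert hasDerivAt_eigencoord hW hA (hζ s hs) i using 1
    simp [inv_mulVec_mulVec_of_eq_conj hW hA, hi]
  rw [constant_of_has_deriv_right_zero (fun s hs => (hderiv s hs).continuousAt.continuousWithinAt)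
    (fun s hs => (hderiv s (Ico_subset_Icc_self hs)).hasDerivWithinAt) b (right_mem_Icc.2 hab),
    hy, ofReal_comp_mulVec, hpow, inv_mulVec_pow_mulVec_of_eq_conj hW hA, hi, zero_pow hk, zero_mul]

theorem norm_eigencoord_le_of_le_re (hW : IsUnit W)
    (hA : A.map Complex.ofReal = W * diagonal ev * W⁻¹) {a b ρ c : ℝ} (hab : a ≤ b) (hβ : 0 < β)
    (hρ : 0 < ρ) {i : ι} (hre : ρ ≤ (ev i).re)
    (hζ : ∀ s ∈ Icc a b, HasDerivAt ζ (-β • (A *ᵥ ζ s + A *ᵥ ε s)) s)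
    (hε : ∀ s ∈ Icc a b, ‖ε s‖ ≤ c) :
    ‖(W⁻¹ *ᵥ (Complex.ofReal ∘ ζ b)) i‖ ≤ exp (-(β * ρ * (b - a))) * (‖W⁻¹‖ * ‖ζ a‖)
      + ‖W⁻¹‖ * ‖A‖ * c / ρ * (1 - exp (-(β * ρ * (b - a)))) := by
  have hforcing : ∀ s ∈ Icc a b,
      ‖-(β : ℂ) * (W⁻¹ *ᵥ (A.map Complex.ofReal *ᵥ (Complex.ofReal ∘ ε s))) i‖
        ≤ β * (‖W⁻¹‖ * ‖A‖ * c) := by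
    intro s hs
    rw [norm_mul, norm_neg, Complex.norm_real, norm_of_nonneg hβ.le, mul_assoc ‖W⁻¹‖]
    gcongr
    exact (norm_mulVec_map_ofReal_mulVec_apply_le _ _ _ i).trans (by gcongr; exact hε s hs)
  calc _ ≤ exp (-(β * ρ * (b - a))) * ‖(W⁻¹ *ᵥ (Complex.ofReal ∘ ζ a)) i‖
        + β * (‖W⁻¹‖ * ‖A‖ * c) / (β * ρ) * (1 - exp (-(β * ρ * (b - a)))) :=
        norm_le_of_hasDerivAt_eq_neg_smul_add_of_le_re (μ := β * ev i) hab (by positivity)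
          (by simpa using mul_le_mul_of_nonneg_left hre hβ.le)
          (fun s hs => hasDerivAt_eigencoord hW hA (hζ s hs) i) hforcing
    _ ≤ _ := by
        rw [mul_div_mul_left _ _ hβ.ne']
        gcongr
        exact norm_mulVec_ofReal_comp_apply_le _ _ i

end Eigencoordinates

theorem norm_le_mul_of_forall_norm_eigencoord_le {ι : Type*} [Fintype ι] [DecidableEq ι]
    {W : Matrix ι ι ℂ} (hW : IsUnit W) {v : ι → ℝ} {B : ℝ} (hB : 0 ≤ B)
    (h : ∀ i, ‖(W⁻¹ *ᵥ (Complex.ofReal ∘ v)) i‖ ≤ B) : ‖v‖ ≤ ‖W‖ * B :=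
  calc ‖v‖ = ‖W *ᵥ (W⁻¹ *ᵥ (Complex.ofReal ∘ v))‖ := by
        rw [mulVec_mulVec, mul_nonsing_inv W ((isUnit_iff_isUnit_det W).1 hW), one_mulVec,
          norm_ofReal_comp]
    _ ≤ ‖W‖ * ‖W⁻¹ *ᵥ (Complex.ofReal ∘ v)‖ := linfty_opNorm_mulVec _ _
    _ ≤ ‖W‖ * B := by
        gcongr
        exact (pi_norm_le_iff_of_nonneg hB).2 h

theorem disagreement_decay_bound_general (m n : ℕ)
    (A : Matrix (Fin m) (Fin m) ℝ)
    (W : Matrix (Fin m) (Fin m) ℂ) (hW : IsUnit W)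
    (ev : Fin m → ℂ) (hA : A.map Complex.ofReal = W * Matrix.diagonal ev * W⁻¹)
    (Λ1re : ℝ) (hΛ1 : 0 < Λ1re) (hev : ∀ i, ev i = 0 ∨ Λ1re ≤ (ev i).re)
    (β : ℝ) (hβ : 0 < β) (τl τl1 : ℝ)
    (ζ ε : ℝ → (Fin m → ℝ))
    (hode : ∀ τ ∈ Set.Ico τl τl1,
      HasDerivAt ζ (-β • (A.mulVec (ζ τ) + A.mulVec (ε τ))) τ)
    (εbar : ℝ)
    (hεbd : ∀ τ ∈ Set.Ico τl τl1, ‖ε τ‖ ≤ Real.sqrt n * εbar)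
    (hζ0 : ∃ y : Fin m → ℝ, ζ τl = (A ^ m).mulVec y) :
    ∀ τ ∈ Set.Ico τl τl1,
      ‖ζ τ‖ ≤ (‖W‖ * ‖W⁻¹‖ * ‖A‖ * Real.sqrt n / Λ1re) * εbar
        + Real.exp (-(β * Λ1re * (τ - τl))) *
            (‖W‖ * ‖W⁻¹‖ * ‖ζ τl‖ - (‖W‖ * ‖W⁻¹‖ * ‖A‖ * Real.sqrt n / Λ1re) * εbar) := by
  intro τ hτ
  have hIcc : Icc τl τ ⊆ Ico τl τl1 := fun s hs => ⟨hs.1, hs.2.trans_lt hτ.2⟩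
  have hodeτ : ∀ s ∈ Icc τl τ, _ := fun s hs => hode s (hIcc hs)
  have hc : 0 ≤ √n * εbar := (norm_nonneg _).trans (hεbd τ hτ)
  have hdecay : 0 ≤ 1 - exp (-(β * Λ1re * (τ - τl))) :=
    sub_nonneg.2 (exp_le_one_iff.2 (neg_nonpos.2 (by have := sub_nonneg.2 hτ.1; positivity)))
  set B := exp (-(β * Λ1re * (τ - τl))) * (‖W⁻¹‖ * ‖ζ τl‖)
    + ‖W⁻¹‖ * ‖A‖ * (√n * εbar) / Λ1re * (1 - exp (-(β * Λ1re * (τ - τl))))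
  have hB : 0 ≤ B := by positivity
  have hmode : ∀ i, ‖(W⁻¹ *ᵥ (Complex.ofReal ∘ ζ τ)) i‖ ≤ B := by
    intro i
    rcases hev i with hzero | hre
    · obtain ⟨y, hy⟩ := hζ0
      rwa [eigencoord_eq_zero_of_eigenvalue_eq_zero hW hA hτ.1 hodeτ i.pos.ne' hy hzero, norm_zero]
    · exact norm_eigencoord_le_of_le_re hW hA hτ.1 hβ hΛ1 hre hodeτ
        (fun s hs => hεbd s (hIcc hs))
  calc ‖ζ τ‖ ≤ ‖W‖ * B := norm_le_mul_of_forall_norm_eigencoord_le hW hB hmode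
    _ = _ := by ring

/-- Variation-of-constants decay bound. Let `ζ` satisfy `ζ'(τ) = -βAζ(τ) - βAε(τ)` on
`[τ_l, τ_{l+1})`, with `‖ε(τ)‖ ≤ √n ε̄`, where `A` is diagonalizable as `A = W J W⁻¹`
over `ℂ` with eigenvalues either `0` or with real part `≥ Re(Λ₁) > 0`, and the
zero-eigenspace projection annihilates `ζ(τ_l)` and `Aε(τ)` (i.e. they lie in `im(A^m)`).
Then `‖ζ(τ)‖ ≤ c₂ ε̄ + e^{-β Re(Λ₁)(τ-τ_l)} (c₁ ‖ζ(τ_l)‖ - c₂ ε̄)` with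
`c₁ = ‖W‖‖W⁻¹‖` and `c₂ = c₁ ‖A‖ √n / Re(Λ₁)`. -/
theorem disagreement_decay_bound (m n : ℕ)
    (A : Matrix (Fin m) (Fin m) ℝ)
    (W : Matrix (Fin m) (Fin m) ℂ) (hW : IsUnit W)
    (ev : Fin m → ℂ) (hA : A.map Complex.ofReal = W * Matrix.diagonal ev * W⁻¹)
    (Λ1re : ℝ) (hΛ1 : 0 < Λ1re) (hev : ∀ i, ev i = 0 ∨ Λ1re ≤ (ev i).re)
    (β : ℝ) (hβ : 0 < β) (τl τl1 : ℝ) (hτ : τl < τl1)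
    (ζ ε : ℝ → (Fin m → ℝ))
    (hεcont : ContinuousOn ε (Set.Icc τl τl1))
    (hode : ∀ τ ∈ Set.Ico τl τl1,
      HasDerivAt ζ (-β • (A.mulVec (ζ τ) + A.mulVec (ε τ))) τ)
    (εbar : ℝ) (hεbar0 : 0 ≤ εbar)
    (hεbd : ∀ τ ∈ Set.Ico τl τl1, ‖ε τ‖ ≤ Real.sqrt n * εbar)
    (hζ0 : ∃ y : Fin m → ℝ, ζ τl = (A ^ m).mulVec y)
    (hAε : ∀ τ ∈ Set.Ico τl τl1, ∃ y : Fin m → ℝ, A.mulVec (ε τ) = (A ^ m).mulVec y) :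
    ∀ τ ∈ Set.Ico τl τl1,
      ‖ζ τ‖ ≤ (‖W‖ * ‖W⁻¹‖ * ‖A‖ * Real.sqrt n / Λ1re) * εbar
        + Real.exp (-(β * Λ1re * (τ - τl))) *
            (‖W‖ * ‖W⁻¹‖ * ‖ζ τl‖ - (‖W‖ * ‖W⁻¹‖ * ‖A‖ * Real.sqrt n / Λ1re) * εbar) :=
  disagreement_decay_bound_general m n A W hW ev hA Λ1re hΛ1 hev β hβ τl τl1 ζ ε hode εbar hεbd hζ0
end
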